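/- Let f, f₁, …, f_m be fix-actions such that f does not interfere with any of f₁, …, f_m. Let s be a network state such that f is applicable to s and the sequence f₁, …, f_m, f is applicable to s. Then the sequence f, f₁, …, f_m is also applicable to s, has the same total cost, and yields the same resulting state: s[f₁, …, f_m, f] = s[f, f₁, …, f_m]. -/

import Mathlib

/-- A fix-action over network propositions `P`: precondition and postcondition
are finite sets of literals (a literal is a pair of a proposition and a
polarity, `true` for a positive and `false` for a negative occurrence),
containing at most one literal per proposition, together with a strictly
positive real cost. -/
structure FixAction (P : Type*) where
  pre : Finset (P × Bool)
  post : Finset (P × Bool)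
  cost : ℝ
  cost_pos : 0 < cost
  pre_unique : ∀ (p : P) (b b' : Bool), (p, b) ∈ pre → (p, b') ∈ pre → b = b'
  post_unique : ∀ (p : P) (b b' : Bool), (p, b) ∈ post → (p, b') ∈ post → b = b'

variable {P : Type*} [DecidableEq P]

/-- A network state `s` satisfies a literal `(p, true)` iff `p ∈ s`,
and satisfies `(p, false)` iff `p ∉ s`. -/
def satLit (s : Finset P) (l : P × Bool) : Prop :=
  (l.1 ∈ s) ↔ l.2 = true

/-- A fix-action is applicable to a state if the state satisfies every
literal of its precondition. -/
def FixAction.applicable (f : FixAction P) (s : Finset P) : Prop :=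
  ∀ l ∈ f.pre, satLit s l

/-- The result `s[f]` of applying a fix-action: every proposition occurring
positively in `post f`, together with every proposition of `s` whose
negation does not occur in `post f`. -/
def FixAction.applyTo (f : FixAction P) (s : Finset P) : Finset P :=
  (f.post.filter (fun l => l.2 = true)).image Prod.fst ∪
    s.filter (fun p => (p, false) ∉ f.post)

/-- Applicability of a finite sequence of fix-actions to a state. -/
def seqApplicable (s : Finset P) : List (FixAction P) → Prop
  | [] => True
  | f :: σ => f.applicable s ∧ seqApplicable (f.applyTo s) σ

/-- The result `s[σ]` of applying a sequence of fix-actions. -/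
def seqApply (s : Finset P) : List (FixAction P) → Finset P
  | [] => s
  | f :: σ => seqApply (f.applyTo s) σ

/-- The cost of a sequence of fix-actions: the sum of the costs of its
elements. -/
noncomputable def seqCost (σ : List (FixAction P)) : ℝ :=
  (σ.map FixAction.cost).sum

/-- `f₁` disables `f₂` if some literal in `post f₁` is the negation of a
literal in `pre f₂`. -/
def disablesFix (f₁ f₂ : FixAction P) : Prop :=
  ∃ (p : P) (b : Bool), (p, b) ∈ f₁.post ∧ (p, !b) ∈ f₂.pre

/-- `f₁` and `f₂` conflict if some literal in `post f₁` is the negation of a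
literal in `post f₂`. -/
def conflictFix (f₁ f₂ : FixAction P) : Prop :=
  ∃ (p : P) (b : Bool), (p, b) ∈ f₁.post ∧ (p, !b) ∈ f₂.post

/-- `f₁` and `f₂` interfere if they conflict or either disables the other. -/
def interfereFix (f₁ f₂ : FixAction P) : Prop :=
  conflictFix f₁ f₂ ∨ disablesFix f₁ f₂ ∨ disablesFix f₂ f₁

/- Applying `f` only touches the propositions named in `post f`. An action `g` that `f` does not
conflict with writes no contrary literal on those propositions, so `f` and `g` commute; and an
action that `f` does not disable keeps its precondition satisfied after `f`. Moving `f` across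
`f₁, …, f_m` one action at a time therefore preserves both applicability and the final state. -/

namespace FixAction

@[simp]
lemma mem_applyTo (f : FixAction P) (s : Finset P) (p : P) :
    p ∈ f.applyTo s ↔ (p, true) ∈ f.post ∨ (p ∈ s ∧ (p, false) ∉ f.post) := by
  simp only [applyTo, Finset.mem_union, Finset.mem_image, Finset.mem_filter]
  constructor
  · rintro (⟨⟨q, b⟩, ⟨hq, rfl⟩, rfl⟩ | hs)
    · exact Or.inl hq
    · exact Or.inr hs
  · rintro (hp | hs)
    · exact Or.inl ⟨(p, true), ⟨hp, rfl⟩, rfl⟩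
    · exact Or.inr hs

lemma applyTo_comm {f g : FixAction P} (h : ¬ conflictFix f g) (s : Finset P) :
    f.applyTo (g.applyTo s) = g.applyTo (f.applyTo s) := by
  ext p
  have h₁ : ¬ ((p, true) ∈ f.post ∧ (p, false) ∈ g.post) := fun ⟨hf, hg⟩ => h ⟨p, true, hf, hg⟩
  have h₂ : ¬ ((p, false) ∈ f.post ∧ (p, true) ∈ g.post) := fun ⟨hf, hg⟩ => h ⟨p, false, hf, hg⟩
  simp only [mem_applyTo]
  tauto

lemma applicable_applyTo {f g : FixAction P} (h : ¬ disablesFix g f) {s : Finset P}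
    (hf : f.applicable s) : f.applicable (g.applyTo s) := by
  rintro ⟨p, b⟩ hl
  have hnot : (p, !b) ∉ g.post := fun hg => h ⟨p, !b, hg, by simpa using hl⟩
  have hs := hf _ hl
  cases b <;> simp_all [satLit]

end FixAction

lemma seqApply_append_singleton (s : Finset P) (σ : List (FixAction P)) (f : FixAction P) :
    seqApply s (σ ++ [f]) = f.applyTo (seqApply s σ) := by
  induction σ generalizing s with
  | nil => rfl
  | cons g σ ih => exact ih (g.applyTo s)

lemma seqApplicable_append {s : Finset P} {σ τ : List (FixAction P)} :
    seqApplicable s (σ ++ τ) ↔ seqApplicable s σ ∧ seqApplicable (seqApply s σ) τ := by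
  induction σ generalizing s with
  | nil => simp [seqApplicable, seqApply]
  | cons g σ ih => simp only [List.cons_append, seqApplicable, seqApply, ih, and_assoc]

lemma applyTo_seqApply_comm {f : FixAction P} {σ : List (FixAction P)}
    (h : ∀ g ∈ σ, ¬ conflictFix f g) (s : Finset P) :
    f.applyTo (seqApply s σ) = seqApply (f.applyTo s) σ := by
  induction σ generalizing s with
  | nil => rfl
  | cons g σ ih =>
    rw [seqApply, seqApply, ih (fun g' hg' => h g' (List.mem_cons_of_mem g hg')),
      FixAction.applyTo_comm (h g List.mem_cons_self)]

lemma seqApplicable_applyTo {f : FixAction P} {σ : List (FixAction P)}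
    (h : ∀ g ∈ σ, ¬ conflictFix f g ∧ ¬ disablesFix f g) {s : Finset P}
    (hσ : seqApplicable s σ) : seqApplicable (f.applyTo s) σ := by
  induction σ generalizing s with
  | nil => trivial
  | cons g σ ih =>
    obtain ⟨hconf, hdis⟩ := h g List.mem_cons_self
    obtain ⟨hg, hσ⟩ := hσ
    refine ⟨FixAction.applicable_applyTo hdis hg, ?_⟩
    rw [← FixAction.applyTo_comm hconf]
    exact ih (fun g' hg' => h g' (List.mem_cons_of_mem g hg')) hσ

/-- If `f` does not interfere with any action of the sequence `σ = f₁,…,f_m`,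
`f` is applicable to `s`, and `σ ++ [f]` is applicable to `s`, then the
sequence `f :: σ` is also applicable to `s`, has the same total cost, and
yields the same resulting state. -/
theorem noninterfering_action_moves_to_front
    {P : Type*} [DecidableEq P]
    (f : FixAction P) (σ : List (FixAction P))
    (hni : ∀ g ∈ σ, ¬ interfereFix f g)
    (s : Finset P) (hf : f.applicable s)
    (happ : seqApplicable s (σ ++ [f])) :
    seqApplicable s (f :: σ) ∧
    seqCost (f :: σ) = seqCost (σ ++ [f]) ∧
    seqApply s (σ ++ [f]) = seqApply s (f :: σ) := by
  have hconf : ∀ g ∈ σ, ¬ conflictFix f g := fun g hg hc => hni g hg (Or.inl hc)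
  have hdis : ∀ g ∈ σ, ¬ disablesFix f g := fun g hg hd => hni g hg (Or.inr (Or.inl hd))
  have hσ : seqApplicable s σ := (seqApplicable_append.1 happ).1
  refine ⟨⟨hf, seqApplicable_applyTo (fun g hg => ⟨hconf g hg, hdis g hg⟩) hσ⟩, ?_, ?_⟩
  · simp [seqCost, add_comm]
  · rw [seqApply_append_singleton, applyTo_seqApply_comm hconf]
    rfl
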